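/- If a function F : E → ℝ is negative definite (F x ≤ 0 with equality iff x = 0), concave on a real normed vector space E (finite-dimensional), and F(x_t) → 0 along a sequence x_t, then x_t → 0. -/

import Mathlib

/-!
A concave function is continuous in finite dimension, so on the compact sphere of radius `ε` the
negative function `F` stays below some `-δ < 0`. If `F 0 = 0`, concavity along the segment
from `0` to `y` gives `F y ≤ F (θ • y)` for `θ ∈ [0, 1]` whenever `F y ≤ 0`; radially projecting
`y` with `‖y‖ ≥ ε` onto the sphere therefore shows `F y ≤ -δ`. Hence `F (x t) → 0` forces
`‖x t‖ < ε` eventually.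
-/

open Filter Set Topology

theorem ConcaveOn.apply_le_apply_smul {E : Type*} [AddCommGroup E] [Module ℝ E] {s : Set E}
    {F : E → ℝ} (hF : ConcaveOn ℝ s F) (h0 : (0 : E) ∈ s) (hF0 : F 0 = 0) {y : E} (hy : y ∈ s)
    (hFy : F y ≤ 0) {θ : ℝ} (hθ0 : 0 ≤ θ) (hθ1 : θ ≤ 1) : F y ≤ F (θ • y) := by
  have h := hF.2 h0 hy (sub_nonneg.2 hθ1) hθ0 (sub_add_cancel 1 θ)
  simp only [smul_zero, zero_add, hF0, smul_eq_mul, mul_zero] at h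
  nlinarith

theorem ConcaveOn.exists_pos_le_neg_of_le_norm {E : Type*} [NormedAddCommGroup E]
    [NormedSpace ℝ E] [FiniteDimensional ℝ E] {F : E → ℝ} (hF : ConcaveOn ℝ univ F)
    (hF0 : F 0 = 0) (hFneg : ∀ y : E, y ≠ 0 → F y < 0) {ε : ℝ} (hε : 0 < ε) :
    ∃ δ > 0, ∀ y : E, ε ≤ ‖y‖ → F y ≤ -δ := by
  have hcont : Continuous F := continuousOn_univ.1 (hF.continuousOn isOpen_univ)
  obtain ⟨δ, hδ, hsphere⟩ := (isCompact_sphere (0 : E) ε).exists_forall_le' (f := fun z => -F z)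
    hcont.neg.continuousOn fun z hz => neg_pos.2 (hFneg z (ne_zero_of_mem_sphere hε.ne' ⟨z, hz⟩))
  refine ⟨δ, hδ, fun y hy => ?_⟩
  have hy0 : 0 < ‖y‖ := hε.trans_le hy
  have hproj : (ε / ‖y‖) • y ∈ Metric.sphere (0 : E) ε := by
    rw [mem_sphere_zero_iff_norm, norm_smul, Real.norm_of_nonneg (div_nonneg hε.le hy0.le),
      div_mul_cancel₀ ε hy0.ne']
  calc F y ≤ F ((ε / ‖y‖) • y) :=
        hF.apply_le_apply_smul (mem_univ 0) hF0 (mem_univ y)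
          (hFneg y (norm_pos_iff.1 hy0)).le (div_nonneg hε.le hy0.le) ((div_le_one hy0).2 hy)
    _ ≤ -δ := le_neg.1 (hsphere _ hproj)

theorem stmt_16 {E : Type*} [NormedAddCommGroup E] [NormedSpace ℝ E]
    [FiniteDimensional ℝ E]
    (F : E → ℝ) (hconc : ConcaveOn ℝ Set.univ F)
    (hF0 : F 0 = 0) (hFneg : ∀ x : E, x ≠ 0 → F x < 0)
    (x : ℕ → E)
    (hFx : Filter.Tendsto (fun t => F (x t)) Filter.atTop (nhds 0)) :
    Filter.Tendsto x Filter.atTop (nhds 0) := by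
  rw [NormedAddGroup.tendsto_nhds_zero]
  intro ε hε
  obtain ⟨δ, hδ, hbound⟩ := hconc.exists_pos_le_neg_of_le_norm hF0 hFneg hε
  filter_upwards [hFx.eventually (lt_mem_nhds (neg_lt_zero.2 hδ))] with t ht
  by_contra! hfar
  exact (hbound (x t) hfar).not_gt ht
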